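/- arXiv:2408.07546 — 2 statements merged into one kernel-verified Lean document; each statement's English description precedes it below -/
import Mathlib

section
/- Let M be a matroid with weight function w and unique minimum weight bases for all restrictions. For any subset F ⊆ E, the minimum-weight basis of M restricted to E \ F can be obtained by iteratively deleting the elements of F from the current minimum-weight basis one at a time (in any order) and replacing each deleted basis element by its minimum-weight replacement element; elements of F not in the current basis are simply deleted. -/
open Finset

/-- A matroid on a finite ground set, given by its ground set and
independence predicate, following the axioms in the paper. -/
structure FinMatroid (α : Type*) [DecidableEq α] where
  E : Finset α
  Indep : Finset α → Prop
  empty_indep : Indep ∅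
  indep_subset_ground : ∀ {A}, Indep A → A ⊆ E
  indep_subset : ∀ {A B}, Indep A → B ⊆ A → Indep B
  exchange : ∀ {A B}, Indep A → Indep B → B.card < A.card →
    ∃ a ∈ A \ B, Indep (insert a B)

namespace FinMatroid

variable {α : Type*} [DecidableEq α]

/-- A basis is an inclusion-wise maximal independent set. -/
def IsBasis (M : FinMatroid α) (B : Finset α) : Prop :=
  M.Indep B ∧ ∀ A, M.Indep A → B ⊆ A → A = B

/-- Restriction of a matroid to a subset of the ground set. -/
def restrict (M : FinMatroid α) (E' : Finset α) : FinMatroid α where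
  E := M.E ∩ E'
  Indep A := M.Indep A ∧ A ⊆ E'
  empty_indep := ⟨M.empty_indep, empty_subset _⟩
  indep_subset_ground := fun h => subset_inter (M.indep_subset_ground h.1) h.2
  indep_subset := fun h hBA => ⟨M.indep_subset h.1 hBA, hBA.trans h.2⟩
  exchange := by
    intro A B hA hB hlt
    obtain ⟨x, hx, hi⟩ := M.exchange hA.1 hB.1 hlt
    exact ⟨x, hx, hi, insert_subset_iff.2 ⟨hA.2 (mem_sdiff.mp hx).1, hB.2⟩⟩

/-- Deletion of a set of elements from a matroid. -/
def delete (M : FinMatroid α) (F : Finset α) : FinMatroid α :=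
  M.restrict (M.E \ F)

/-- The weight of a set of elements. -/
def weight (w : α → ℝ) (B : Finset α) : ℝ := ∑ e ∈ B, w e

/-- A minimum-weight basis. -/
def IsMinBasis (M : FinMatroid α) (w : α → ℝ) (B : Finset α) : Prop :=
  M.IsBasis B ∧ ∀ B', M.IsBasis B' → weight w B ≤ weight w B'

/-- `r` is the (minimum-weight) replacement element of `g` in the basis `B`. -/
def IsReplacement (M : FinMatroid α) (w : α → ℝ) (B : Finset α) (g r : α) : Prop :=
  g ∈ B ∧ r ∈ M.E ∧ r ∉ B ∧ M.Indep (insert r (B.erase g)) ∧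
  ∀ r' ∈ M.E, r' ∉ B → M.Indep (insert r' (B.erase g)) → w r ≤ w r'

/-- A circuit is a minimal dependent set. -/
def IsCircuit (M : FinMatroid α) (C : Finset α) : Prop :=
  C ⊆ M.E ∧ ¬ M.Indep C ∧ ∀ x ∈ C, M.Indep (C.erase x)

end FinMatroid

open FinMatroid

variable {α : Type*} [DecidableEq α]

/-- Iterative deletion-and-replacement process: starting from matroid `M` and
basis `B`, deleting the elements of `F` one at a time (in any order), replacing
each deleted basis element by its minimum-weight replacement element and simply
deleting elements not in the current basis, yields the set `B'`. -/
inductive IterDel (w : α → ℝ) :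
    FinMatroid α → Finset α → Finset α → Finset α → Prop where
  | nil (M : FinMatroid α) (B : Finset α) : IterDel w M B ∅ B
  | skip (M : FinMatroid α) (B F : Finset α) (g : α) (B' : Finset α)
      (hgF : g ∈ F) (hg : g ∉ B)
      (h : IterDel w (M.delete {g}) B (F.erase g) B') :
      IterDel w M B F B'
  | swap (M : FinMatroid α) (B F : Finset α) (g r : α) (B' : Finset α)
      (hgF : g ∈ F)
      (hrepl : M.IsReplacement w B g r)
      (h : IterDel w (M.delete {g}) (insert r (B.erase g)) (F.erase g) B') :
      IterDel w M B F B'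

/-! Deleting an element outside the current minimum basis `B` keeps `B` minimal, since the bases of
the deletion are then exactly the bases of `M` avoiding that element. If `g ∈ B` is deleted and `r`
is its replacement, `B - g + r` is minimal in `M ∖ g`: a basis `B₁` avoiding `g` is moved towards
`B` by symmetric exchanges `B₁ - b + e` with `e ∈ B - g`, none of which increases the weight because
`B - e + b` is also a basis and `B` is minimal. The walk ends at some `B - g + y`, and `y` is a
candidate replacement, so it weighs at least `w r`. -/

theorem Matroid.IsBase.exists_symm_exchange {α : Type*} {M : Matroid α} {A B : Set α} {a : α}
    (hA : M.IsBase A) (hB : M.IsBase B) (ha : a ∈ A \ B) :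
    ∃ b ∈ B \ A, M.Indep (insert b (A \ {a})) ∧ M.Indep (insert a (B \ {b})) := by
  have haE : a ∈ M.E := hA.subset_ground ha.1
  obtain ⟨b, ⟨hbC, hbK⟩, hba⟩ :=
    ((hB.fundCircuit_isCircuit haE ha.2).isCocircuit_inter_nontrivial
      (M.fundCocircuit_isCocircuit ha.1 hA)
      ⟨a, M.mem_fundCircuit a B, M.mem_fundCocircuit a A⟩).exists_ne a
  have hbB : b ∈ B :=
    (Set.mem_insert_iff.1 (M.fundCircuit_subset_insert a B hbC)).resolve_left hba
  have hbA : b ∉ A := fun hbA =>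
    hba (by simpa using (M.fundCocircuit_inter_eq ha.1).subset ⟨hbK, hbA⟩)
  refine ⟨b, ⟨hbB, hbA⟩, ?_, ?_⟩
  · rwa [hA.mem_fundCocircuit_iff_mem_fundCircuit,
      hA.indep.mem_fundCircuit_iff (by rw [hA.closure_eq]; exact hB.subset_ground hbB) hbA,
      ← Set.insert_sdiff_singleton_comm hba] at hbK
  · rwa [hB.indep.mem_fundCircuit_iff (by rw [hB.closure_eq]; exact haE) ha.2,
      ← Set.insert_sdiff_singleton_comm (Ne.symm hba)] at hbC

namespace FinMatroid

variable {M : FinMatroid α} {w : α → ℝ} {A B B₁ F G I : Finset α} {e f g r : α}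

@[ext]
theorem ext {M₁ M₂ : FinMatroid α} (hE : M₁.E = M₂.E) (hI : ∀ A, M₁.Indep A ↔ M₂.Indep A) :
    M₁ = M₂ := by
  obtain ⟨E₁, I₁⟩ := M₁
  obtain ⟨E₂, I₂⟩ := M₂
  obtain rfl : E₁ = E₂ := hE
  obtain rfl : I₁ = I₂ := funext fun A => propext (hI A)
  rfl

theorem delete_indep_iff : (M.delete F).Indep A ↔ M.Indep A ∧ Disjoint A F := by
  simp only [delete, restrict, subset_sdiff]
  exact ⟨fun h => ⟨h.1, h.2.2⟩, fun h => ⟨h.1, M.indep_subset_ground h.1, h.2⟩⟩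

@[simp]
theorem delete_empty : M.delete ∅ = M := by
  ext A
  · simp [delete, restrict]
  · simp [delete_indep_iff]

theorem delete_delete : (M.delete F).delete G = M.delete (F ∪ G) := by
  ext A
  · simp only [delete, restrict, mem_inter, mem_sdiff, mem_union]
    tauto
  · simp only [delete_indep_iff, disjoint_union_right, and_assoc]

theorem delete_singleton_delete_erase (hg : g ∈ F) :
    (M.delete {g}).delete (F.erase g) = M.delete F := by
  rw [delete_delete, ← insert_eq, insert_erase hg]

theorem Indep.card_le_of_isBasis (hI : M.Indep I) (hB : M.IsBasis B) : I.card ≤ B.card := by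
  by_contra! h
  obtain ⟨x, hx, hxB⟩ := M.exchange hI hB.1 h
  exact (mem_sdiff.1 hx).2 (hB.2 _ hxB (subset_insert x B) ▸ mem_insert_self x B)

theorem IsBasis.card_eq (hB : M.IsBasis B) (hB₁ : M.IsBasis B₁) : B.card = B₁.card :=
  le_antisymm (hB.1.card_le_of_isBasis hB₁) (hB₁.1.card_le_of_isBasis hB)

theorem Indep.isBasis_of_card_le (hI : M.Indep I) (hB : M.IsBasis B) (h : B.card ≤ I.card) :
    M.IsBasis I :=
  ⟨hI, fun _ hA hIA =>
    (eq_of_subset_of_card_le hIA (h.trans' (hA.card_le_of_isBasis hB))).symm⟩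

theorem IsBasis.exchange_isBasis (hB : M.IsBasis B) (he : e ∈ B) (hf : f ∉ B)
    (hI : M.Indep (insert f (B.erase e))) : M.IsBasis (insert f (B.erase e)) :=
  hI.isBasis_of_card_le hB <| by
    rw [card_insert_of_notMem (fun h => hf (mem_of_mem_erase h)), card_erase_add_one he]

theorem IsBasis.isBasis_delete_iff (hI : M.IsBasis I) (hIF : Disjoint I F) :
    (M.delete F).IsBasis B ↔ M.IsBasis B ∧ Disjoint B F := by
  refine ⟨fun hB => ?_, fun hB => ?_⟩
  · obtain ⟨hBM, hBF⟩ := delete_indep_iff.1 hB.1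
    refine ⟨hBM.isBasis_of_card_le hI ?_, hBF⟩
    exact (delete_indep_iff.2 ⟨hI.1, hIF⟩).card_le_of_isBasis hB
  · exact ⟨delete_indep_iff.2 ⟨hB.1.1, hB.2⟩, fun A hA hBA => hB.1.2 A (delete_indep_iff.1 hA).1 hBA⟩

theorem IsMinBasis.delete (hB : M.IsMinBasis w B) (hBF : Disjoint B F) :
    (M.delete F).IsMinBasis w B :=
  ⟨(hB.1.isBasis_delete_iff hBF).2 ⟨hB.1, hBF⟩,
    fun B₁ hB₁ => hB.2 B₁ ((hB.1.isBasis_delete_iff hBF).1 hB₁).1⟩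

theorem weight_insert_erase (he : e ∈ B) (hf : f ∉ B) :
    weight w (insert f (B.erase e)) = weight w B - w e + w f := by
  rw [weight, sum_insert (fun h => hf (mem_of_mem_erase h)), weight, ← add_sum_erase B w he]
  ring

def toMatroid (M : FinMatroid α) : Matroid α :=
  (IndepMatroid.ofFinset M.E M.Indep M.empty_indep (fun _ _ hJ hIJ => M.indep_subset hJ hIJ)
    (fun _ _ hI hJ hlt => by
      obtain ⟨e, he, hi⟩ := M.exchange hJ hI hlt
      exact ⟨e, (mem_sdiff.1 he).1, (mem_sdiff.1 he).2, hi⟩)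
    (fun _ hI => by exact_mod_cast M.indep_subset_ground hI)).matroid

theorem toMatroid_indep_coe : M.toMatroid.Indep (I : Set α) ↔ M.Indep I := by
  simp [toMatroid]

theorem IsBasis.isBase_toMatroid (hB : M.IsBasis B) : M.toMatroid.IsBase B := by
  obtain ⟨B', hB', hBB'⟩ := (toMatroid_indep_coe.2 hB.1).exists_isBase_superset
  obtain ⟨T, rfl⟩ := (M.E.finite_toSet.subset hB'.subset_ground).exists_finset_coe
  rwa [hB.2 T (toMatroid_indep_coe.1 hB'.indep) (coe_subset.1 hBB')] at hB'

theorem IsMinBasis.exists_exchange_weight_le (hB : M.IsMinBasis w B) (hB₁ : M.IsBasis B₁)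
    (he : e ∈ B) (he₁ : e ∉ B₁) :
    ∃ b ∈ B₁, b ∉ B ∧ w e ≤ w b ∧ M.IsBasis (insert e (B₁.erase b)) := by
  obtain ⟨b, ⟨hbB₁, hbB⟩, hBb, hB₁e⟩ :=
    hB.1.isBase_toMatroid.exists_symm_exchange hB₁.isBase_toMatroid ⟨he, he₁⟩
  rw [← coe_erase, ← coe_insert, toMatroid_indep_coe] at hBb hB₁e
  refine ⟨b, hbB₁, hbB, ?_, hB₁.exchange_isBasis hbB₁ he₁ hB₁e⟩
  have hle := hB.2 _ (hB.1.exchange_isBasis he hbB hBb)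
  rw [weight_insert_erase he hbB] at hle
  linarith

theorem IsMinBasis.weight_le_of_isReplacement (hB : M.IsMinBasis w B)
    (hr : M.IsReplacement w B g r) (hB₁ : M.IsBasis B₁) (hg : g ∉ B₁) :
    weight w (insert r (B.erase g)) ≤ weight w B₁ := by
  obtain ⟨hgB, -, hrB, -, hrmin⟩ := hr
  induction hn : (B \ B₁).card using Nat.strong_induction_on generalizing B₁ with
  | _ n ih =>
  by_cases hsub : B.erase g ⊆ B₁
  · obtain ⟨y, hy, hyI⟩ := M.exchange hB₁.1 (M.indep_subset hB.1.1 (erase_subset g B))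
      (by rw [hB₁.card_eq hB.1]; exact card_erase_lt_of_mem hgB)
    have hyB : y ∉ B := fun hyB => (mem_sdiff.1 hy).2 (mem_erase.2 ⟨ne_of_mem_of_not_mem (mem_sdiff.1 hy).1 hg, hyB⟩)
    have hB₁_eq : B₁ = insert y (B.erase g) :=
      (hB.1.exchange_isBasis hgB hyB hyI).2 B₁ hB₁.1 (insert_subset (mem_sdiff.1 hy).1 hsub)
    rw [hB₁_eq, weight_insert_erase hgB hrB, weight_insert_erase hgB hyB]
    linarith [hrmin y (M.indep_subset_ground hB₁.1 (mem_sdiff.1 hy).1) hyB hyI]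
  · obtain ⟨e, heB, he₁⟩ := not_subset.1 hsub
    obtain ⟨b, hbB₁, hbB, hwe, hB₁'⟩ :=
      hB.exists_exchange_weight_le hB₁ (mem_of_mem_erase heB) he₁
    have hlt : (B \ insert e (B₁.erase b)).card < n :=
      hn ▸ card_lt_card ((ssubset_iff_of_subset (fun x hx => by grind)).2 ⟨e, by grind, by grind⟩)
    calc weight w (insert r (B.erase g))
        ≤ weight w (insert e (B₁.erase b)) := ih _ hlt hB₁' (by grind) rfl
      _ = weight w B₁ - w b + w e := weight_insert_erase hbB₁ he₁
      _ ≤ weight w B₁ := by linarith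

theorem IsMinBasis.delete_isReplacement (hB : M.IsMinBasis w B) (hr : M.IsReplacement w B g r) :
    (M.delete {g}).IsMinBasis w (insert r (B.erase g)) := by
  have ⟨hgB, _, hrB, hrI, _⟩ := hr
  have hB₂ := hB.1.exchange_isBasis hgB hrB hrI
  have hB₂g : Disjoint (insert r (B.erase g)) {g} :=
    disjoint_singleton_right.2 (by simp [(ne_of_mem_of_not_mem hgB hrB)])
  refine ⟨(hB₂.isBasis_delete_iff hB₂g).2 ⟨hB₂, hB₂g⟩, fun B₁ hB₁ => ?_⟩
  obtain ⟨hB₁M, hB₁g⟩ := (hB₂.isBasis_delete_iff hB₂g).1 hB₁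
  exact hB.weight_le_of_isReplacement hr hB₁M (disjoint_singleton_right.1 hB₁g)

end FinMatroid

theorem iter_delete_gives_min_basis_general (M : FinMatroid α) (w : α → ℝ)
    (B : Finset α) (hB : M.IsMinBasis w B) (F : Finset α) (B' : Finset α) (h : IterDel w M B F B') :
    (M.delete F).IsMinBasis w B' := by
  induction h with
  | nil => rwa [delete_empty]
  | skip M B F g B' hgF hg _ ih =>
    rw [← delete_singleton_delete_erase hgF]
    exact ih (hB.delete (disjoint_singleton_right.2 hg))
  | swap M B F g r B' hgF hr _ ih =>
    rw [← delete_singleton_delete_erase hgF]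
    exact ih (hB.delete_isReplacement hr)

/-- iteratively deleting the elements of `F` in any order and
replacing basis elements by their replacement elements yields the minimum-weight
basis of `M` with `F` deleted. -/
theorem iter_delete_gives_min_basis (M : FinMatroid α) (w : α → ℝ) (k : ℕ)
    (B : Finset α) (hB : M.IsMinBasis w B) (hBk : B.card = k)
    (F : Finset α) (hF : F ⊆ M.E)
    (hrank : ∀ G ⊆ M.E, G.card ≤ F.card →
      ∃ B'', (M.delete G).IsBasis B'' ∧ B''.card = k)
    (huniq : ∀ G ⊆ M.E, G.card ≤ F.card → ∀ B₁ B₂,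
      (M.delete G).IsMinBasis w B₁ → (M.delete G).IsMinBasis w B₂ → B₁ = B₂)
    (B' : Finset α) (h : IterDel w M B F B') :
    (M.delete F).IsMinBasis w B' :=
  iter_delete_gives_min_basis_general M w B hB F B' h
end

section
/- Let M be a matroid, B a basis of M, e ∉ B an element such that B + e contains a circuit C in which e is the heaviest element with respect to a weight function w with distinct weights, and B' another basis of M with e ∈ B'. Then C − e cannot be entirely contained outside B' in a way that blocks all exchanges: there exists a sequence of basis exchanges swapping elements of C − e into B' one by one, each exchange removing an element not in C − e, so that eventually all of C − e is contained in a basis together with e — a contradiction. Formally: it is impossible that e ∈ B' and for every f ∈ C − e with f ∉ B', every g with B' − g + f a basis satisfies g ∈ C − e. -/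
open Finset

open FinMatroid

variable {α : Type*} [DecidableEq α]

namespace FinMatroid

variable {M : FinMatroid α}

theorem Indep.exists_superset_card_eq {I A : Finset α} (hI : M.Indep I) (hA : M.Indep A)
    (hcard : I.card ≤ A.card) :
    ∃ J, I ⊆ J ∧ J ⊆ I ∪ A ∧ M.Indep J ∧ J.card = A.card := by
  induction hk : A.card - I.card generalizing I with
  | zero => exact ⟨I, subset_rfl, subset_union_left, hI, by omega⟩
  | succ k ih =>
    obtain ⟨a, ha, haI⟩ := M.exchange hA hI (by omega)
    rw [mem_sdiff] at ha
    have hcard' : (insert a I).card = I.card + 1 := card_insert_of_notMem ha.2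
    obtain ⟨J, hIJ, hJ, hJI, hJcard⟩ := ih haI (by omega) (by omega)
    refine ⟨J, (subset_insert a I).trans hIJ, hJ.trans ?_, hJI, hJcard⟩
    exact union_subset (insert_subset (mem_union_right I ha.1) subset_union_left)
      subset_union_right

theorem IsBasis.card_le_of_indep {B A : Finset α} (hB : M.IsBasis B) (hA : M.Indep A) :
    A.card ≤ B.card := by
  by_contra! h
  obtain ⟨a, ha, haB⟩ := M.exchange hA hB.1 h
  exact (mem_sdiff.mp ha).2 (hB.2 _ haB (subset_insert a B) ▸ mem_insert_self a B)

theorem IsBasis.of_indep_of_card_le {B A : Finset α} (hB : M.IsBasis B) (hA : M.Indep A)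
    (hcard : B.card ≤ A.card) : M.IsBasis A :=
  ⟨hA, fun _ hA' hsub =>
    (eq_of_subset_of_card_le hsub ((hB.card_le_of_indep hA').trans hcard)).symm⟩

/-- Extending `(B ∩ D) + f` to a basis inside `B + f` drops a single element of `B`, and it
cannot lie in `D`. -/
theorem IsBasis.exists_exchange_notMem {B D : Finset α} {f : α} (hB : M.IsBasis B)
    (hfB : f ∉ B) (hI : M.Indep (insert f (B ∩ D))) :
    ∃ g ∈ B, g ∉ D ∧ M.IsBasis (insert f (B.erase g)) := by
  obtain ⟨J, hIJ, hJsub, hJ, hJcard⟩ :=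
    hI.exists_superset_card_eq hB.1 (hB.card_le_of_indep hI)
  have hJB : J ⊆ insert f B := hJsub.trans <| union_subset
    (insert_subset_insert f inter_subset_left) (subset_insert f B)
  have hfJ : f ∈ J := hIJ (mem_insert_self f _)
  have hmissing : (insert f B \ J).card = 1 := by
    rw [card_sdiff_of_subset hJB, card_insert_of_notMem hfB, hJcard]
    omega
  obtain ⟨g, hg⟩ := card_eq_one.mp hmissing
  have hgJ : g ∈ insert f B ∧ g ∉ J := mem_sdiff.mp (hg ▸ mem_singleton_self g)
  have hgf : g ≠ f := fun h => hgJ.2 (h ▸ hfJ)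
  have hgB : g ∈ B := (mem_insert.mp hgJ.1).resolve_left hgf
  have hJeq : J = insert f (B.erase g) := by
    rw [← erase_insert_of_ne hgf.symm, ← sdiff_singleton_eq_erase, ← hg,
      Finset.sdiff_sdiff_eq_self hJB]
  refine ⟨g, hgB, fun hgD => hgJ.2 (hIJ (mem_insert_of_mem (mem_inter.mpr ⟨hgB, hgD⟩))), ?_⟩
  exact hJeq ▸ hB.of_indep_of_card_le hJ hJcard.ge

end FinMatroid

theorem circuit_exchange_impossible_general (M : FinMatroid α)
    (e : α)
    (C : Finset α) (hC : M.IsCircuit C) (hCe : e ∈ C)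
    (B' : Finset α) (hB' : M.IsBasis B') (heB' : e ∈ B') :
    ¬ (∀ f ∈ C.erase e, f ∉ B' →
        ∀ g ∈ B', M.IsBasis (insert f (B'.erase g)) → g ∈ C.erase e) := by
  intro H
  obtain ⟨f, hfC, hfB'⟩ : ∃ f ∈ C.erase e, f ∉ B' := by
    by_contra! hsub
    refine hC.2.1 (M.indep_subset hB'.1 fun x hx => ?_)
    rcases eq_or_ne x e with rfl | hxe
    · exact heB'
    · exact hsub x (mem_erase.mpr ⟨hxe, hx⟩)
  have hI : M.Indep (insert f (B' ∩ C.erase e)) :=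
    M.indep_subset (hC.2.2 e hCe) (insert_subset hfC inter_subset_right)
  obtain ⟨g, hgB', hgC, hbasis⟩ := hB'.exists_exchange_notMem hfB' hI
  exact hgC (H f hfC hfB' g hgB' hbasis)

/-- if `e ∉ B` is the heaviest element of a circuit `C ⊆ B + e`
and `B'` is a basis containing `e`, then it is impossible that every exchange
swapping an element `f ∈ C − e`, `f ∉ B'` into `B'` removes only elements of
`C − e`. -/
theorem circuit_exchange_impossible (M : FinMatroid α) (w : α → ℝ)
    (hw : Set.InjOn w ↑M.E)
    (B : Finset α) (hB : M.IsBasis B)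
    (e : α) (he : e ∈ M.E) (heB : e ∉ B)
    (C : Finset α) (hC : M.IsCircuit C) (hCe : e ∈ C)
    (hCsub : C ⊆ insert e B)
    (hheavy : ∀ x ∈ C, x ≠ e → w x < w e)
    (B' : Finset α) (hB' : M.IsBasis B') (heB' : e ∈ B') :
    ¬ (∀ f ∈ C.erase e, f ∉ B' →
        ∀ g ∈ B', M.IsBasis (insert f (B'.erase g)) → g ∈ C.erase e) :=
  circuit_exchange_impossible_general M e C hC hCe B' hB' heB'
end
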